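/- Same setting as before but with s ∈ [1, p+1]: for σ ∈ H^s(Ω)² ∩ H(div,Ω), ‖γ_{n,𝒮}(1 − Π_div^p)σ‖_{−1/2,𝒮} ≤ C h^s ‖σ‖_{H^s(Ω)}, with C depending only on the approximation constants, using additionally that ‖(1 − Π^p) div σ‖ ≤ C h^{s−1} ‖div σ‖_{H^{s−1}(Ω)} and ‖div σ‖_{H^{s−1}(Ω)} ≤ ‖σ‖_{H^s(Ω)}. -/

import Mathlib

/-!
Write `e = σ - Π_div σ`. By commutativity `div e = (1 - Π) div σ`, and since `(1 - Π) div σ` is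
orthogonal to the range of `Π`, the pairing `⟨e, ∇v⟩ + ⟨div e, v⟩` equals
`⟨e, ∇v⟩ + ⟨(1 - Π) div σ, (1 - Π) v⟩`. Cauchy–Schwarz and the approximation properties bound the
two terms by `h^s ‖σ‖_s ‖v‖_1` and `h^{s-1} ‖div σ‖_{s-1} · h ‖v‖_1`, which gives the dual-norm bound.
-/

open scoped RealInnerProductSpace

theorem inner_sub_map_eq_of_orthogonal {E : Type*} [NormedAddCommGroup E]
    [InnerProductSpace ℝ E] {P : E → E} (hP : ∀ x y, ⟪x - P x, P y⟫ = 0) (x y : E) :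
    ⟪x - P x, y⟫ = ⟪x - P x, y - P y⟫ := by
  rw [inner_sub_right, hP, sub_zero]

theorem iSup_div_norm_le {E : Type*} [NormedAddCommGroup E] {f : E → ℝ} {B : ℝ} (hB : 0 ≤ B)
    (hf : ∀ v, f v ≤ B * ‖v‖) : ⨆ v : {v : E // v ≠ 0}, f v / ‖(v : E)‖ ≤ B :=
  Real.iSup_le (fun v => (div_le_iff₀ (norm_pos_iff.mpr v.2)).mpr (hf v)) hB

theorem nonneg_of_norm_le_mul {E : Type*} [SeminormedAddCommGroup E] {x : E} {c N : ℝ}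
    (hc : 0 < c) (hx : ‖x‖ ≤ c * N) : 0 ≤ N :=
  nonneg_of_mul_nonneg_right ((norm_nonneg x).trans hx) hc

theorem stmt10_general
    {Hdv Hb L2 L2v : Type*}
    [NormedAddCommGroup Hdv] [InnerProductSpace ℝ Hdv]
    [NormedAddCommGroup Hb] [InnerProductSpace ℝ Hb]
    [NormedAddCommGroup L2] [InnerProductSpace ℝ L2]
    [NormedAddCommGroup L2v] [InnerProductSpace ℝ L2v]
    (Div : Hdv →ₗ[ℝ] L2) (Emb : Hdv →ₗ[ℝ] L2v)
    (Grad : Hb →ₗ[ℝ] L2v) (emb : Hb →ₗ[ℝ] L2)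
    (hnormHb : ∀ v : Hb, ‖v‖ ^ 2 = ‖Grad v‖ ^ 2 + ‖emb v‖ ^ 2)
    (pair : Hdv →ₗ[ℝ] Hb →ₗ[ℝ] ℝ)
    (hpair : ∀ (σ : Hdv) (v : Hb), pair σ v = ⟪Emb σ, Grad v⟫ + ⟪Div σ, emb v⟫)
    (h C0 Cp s : ℝ) (hh : 0 < h) (hC0 : 0 < C0) (hCp : 0 < Cp)
    (P : L2 →ₗ[ℝ] L2)
    (hPorth : ∀ x y : L2, ⟪x - P x, P y⟫ = 0)
    (Pdiv : Hdv →ₗ[ℝ] Hdv) (hcomm : ∀ σ : Hdv, Div (Pdiv σ) = P (Div σ))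
    (HsNorm HsDivNorm : Hdv → ℝ)
    (happrox1 : ∀ σ : Hdv, ‖Emb σ - Emb (Pdiv σ)‖ ≤ Cp * h ^ s * HsNorm σ)
    (happrox2 : ∀ v : Hb, ‖emb v - P (emb v)‖ ≤ C0 * h * ‖Grad v‖)
    (happrox3 : ∀ σ : Hdv, ‖Div σ - P (Div σ)‖ ≤ Cp * h ^ (s - 1) * HsDivNorm σ)
    (hdom : ∀ σ : Hdv, HsDivNorm σ ≤ HsNorm σ) :
    ∃ C > 0, ∀ σ : Hdv,
      (⨆ (v : {v : Hb // v ≠ 0}), pair (σ - Pdiv σ) (v : Hb) / ‖(v : Hb)‖)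
        ≤ C * (h ^ s * HsNorm σ) := by
  refine ⟨Cp * (1 + C0), by positivity, fun σ => ?_⟩
  have hN : 0 ≤ HsNorm σ := nonneg_of_norm_le_mul (by positivity) (happrox1 σ)
  have hD : 0 ≤ HsDivNorm σ := nonneg_of_norm_le_mul (by positivity) (happrox3 σ)
  refine iSup_div_norm_le (by positivity) fun v => ?_
  have hGrad : ‖Grad v‖ ≤ ‖v‖ := (sq_le_sq₀ (norm_nonneg _) (norm_nonneg _)).mp <| by
    rw [hnormHb]
    exact le_add_of_nonneg_right (sq_nonneg _)
  calc pair (σ - Pdiv σ) v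
      = ⟪Emb σ - Emb (Pdiv σ), Grad v⟫ + ⟪Div σ - P (Div σ), emb v - P (emb v)⟫ := by
        rw [hpair, map_sub, map_sub, hcomm,
          inner_sub_map_eq_of_orthogonal hPorth]
    _ ≤ ‖Emb σ - Emb (Pdiv σ)‖ * ‖Grad v‖ + ‖Div σ - P (Div σ)‖ * ‖emb v - P (emb v)‖ :=
        add_le_add (real_inner_le_norm _ _) (real_inner_le_norm _ _)
    _ ≤ Cp * h ^ s * HsNorm σ * ‖v‖ + Cp * h ^ (s - 1) * HsDivNorm σ * (C0 * h * ‖v‖) := by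
        gcongr
        · exact happrox1 σ
        · exact happrox3 σ
        · exact (happrox2 v).trans (by gcongr)
    _ = Cp * h ^ s * HsNorm σ * ‖v‖ + Cp * C0 * h ^ s * HsDivNorm σ * ‖v‖ := by
        rw [Real.rpow_sub_one hh.ne']
        field_simp
    _ ≤ Cp * (1 + C0) * (h ^ s * HsNorm σ) * ‖v‖ := by
        have hK : 0 ≤ Cp * C0 * h ^ s * ‖v‖ := by positivity
        nlinarith [mul_le_mul_of_nonneg_left (hdom σ) hK]

/-- Theorem 3.1 (case `s ∈ [1, p+1]`): with the additional approximation property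
`‖(1 − Π^p) div σ‖ ≤ C_p h^{s−1} ‖div σ‖_{H^{s−1}(Ω)}` and the bound
`‖div σ‖_{H^{s−1}(Ω)} ≤ ‖σ‖_{H^s(Ω)}`, one obtains
`‖γ_{n,𝒮}(1 − Π_div^p)σ‖_{−1/2,𝒮} ≤ C h^s ‖σ‖_{H^s(Ω)}` with `C` depending only on the
approximation constants.  Setting encoded abstractly as before; `HsNorm σ` and
`HsDivNorm σ` represent `‖σ‖_{H^s(Ω)}` and `‖div σ‖_{H^{s−1}(Ω)}`. -/
theorem stmt10
    {Hdv Hb L2 L2v : Type*}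
    [NormedAddCommGroup Hdv] [InnerProductSpace ℝ Hdv] [CompleteSpace Hdv]
    [NormedAddCommGroup Hb] [InnerProductSpace ℝ Hb] [CompleteSpace Hb]
    [NormedAddCommGroup L2] [InnerProductSpace ℝ L2] [CompleteSpace L2]
    [NormedAddCommGroup L2v] [InnerProductSpace ℝ L2v] [CompleteSpace L2v]
    (Div : Hdv →ₗ[ℝ] L2) (Emb : Hdv →ₗ[ℝ] L2v)
    (Grad : Hb →ₗ[ℝ] L2v) (emb : Hb →ₗ[ℝ] L2)
    (hnormHb : ∀ v : Hb, ‖v‖ ^ 2 = ‖Grad v‖ ^ 2 + ‖emb v‖ ^ 2)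
    (pair : Hdv →ₗ[ℝ] Hb →ₗ[ℝ] ℝ)
    (hpair : ∀ (σ : Hdv) (v : Hb), pair σ v = ⟪Emb σ, Grad v⟫ + ⟪Div σ, emb v⟫)
    (p : ℕ) (h C0 Cp s : ℝ) (hh : 0 < h) (hC0 : 0 < C0) (hCp : 0 < Cp)
    (hs : 1 ≤ s) (hs1 : s ≤ (p : ℝ) + 1)
    (P : L2 →ₗ[ℝ] L2) (hPproj : ∀ x : L2, P (P x) = P x)
    (hPorth : ∀ x y : L2, ⟪x - P x, P y⟫ = 0)
    (Pdiv : Hdv →ₗ[ℝ] Hdv) (hcomm : ∀ σ : Hdv, Div (Pdiv σ) = P (Div σ))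
    (HsNorm HsDivNorm : Hdv → ℝ)
    (happrox1 : ∀ σ : Hdv, ‖Emb σ - Emb (Pdiv σ)‖ ≤ Cp * h ^ s * HsNorm σ)
    (happrox2 : ∀ v : Hb, ‖emb v - P (emb v)‖ ≤ C0 * h * ‖Grad v‖)
    (happrox3 : ∀ σ : Hdv, ‖Div σ - P (Div σ)‖ ≤ Cp * h ^ (s - 1) * HsDivNorm σ)
    (hdom : ∀ σ : Hdv, HsDivNorm σ ≤ HsNorm σ) :
    ∃ C > 0, ∀ σ : Hdv,
      (⨆ (v : {v : Hb // v ≠ 0}), pair (σ - Pdiv σ) (v : Hb) / ‖(v : Hb)‖)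
        ≤ C * (h ^ s * HsNorm σ) :=
  stmt10_general Div Emb Grad emb hnormHb pair hpair h C0 Cp s hh hC0 hCp P hPorth Pdiv hcomm HsNorm
    HsDivNorm happrox1 happrox2 happrox3 hdom
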